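/- Local exact controllability of perturbed linear ODEs: let A ∈ R^{n×n}, B ∈ R^{n×m} satisfy the Kalman rank condition, and let f ∈ C^1(R^n; R^n) with f(y) = O(|y|^{1+δ}) as y → 0 for some δ > 0. Then the system y' = Ay + f(y) + Bu is locally exactly controllable at 0 in time T: there exists r > 0 such that for all y0, y1 ∈ R^n with |y0|, |y1| < r, there exists a control u ∈ L^∞(0,T;R^m) whose corresponding solution satisfies y(0) = y0 and y(T) = y1. -/

import Mathlib

/-!
For the linear system, the Kalman condition makes the input-to-final-state map
`u ↦ ∫₀ᵀ e^{(T-s)A} B u(s) ds` surjective: a functional `φ` annihilating its range, tested against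
the control `u(s) = φ(e^{(T-s)A} B v) v`, vanishes on `e^{tA} B v` for `t ∈ (0, T)`, hence (by
differentiating in `t`) on every `e^{tA} Aᵏ B v`, hence everywhere.

Fix a continuous linear right inverse `U` of that map. For any continuous `z`, the control
`U (y₁ - e^{TA} y₀ - ∫₀ᵀ e^{(T-s)A} f(z(s)) ds)` steers `y' = Ay + f(z) + Bu` from `y₀` to `y₁`;
so it suffices that the trajectory it produces is `z` itself. That is a fixed-point equation
`z = a(y₀, y₁) + K(f ∘ z)` in `C([0, T], ℝⁿ)`, with `a` and `K` continuous and linear. Since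
`f(0) = 0` and `Df(0) = 0`, the map `z ↦ f ∘ z` has strict derivative `0` at `0`, so by the
inverse function theorem `z ↦ z - K(f ∘ z)` maps a neighbourhood of `0` onto one.
-/

open Filter Topology NormedSpace MeasureTheory intervalIntegral Set

/-- The Kalman controllability matrix `[B, AB, A²B, …, Aⁿ⁻¹B]`. -/
noncomputable def kalmanMatrix {n m : ℕ} (A : Matrix (Fin n) (Fin n) ℝ)
    (B : Matrix (Fin n) (Fin m) ℝ) : Matrix (Fin n) (Fin n × Fin m) ℝ :=
  Matrix.of fun i p => (A ^ (p.1 : ℕ) * B) i p.2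

theorem eventually_exists_eq_add_of_hasStrictFDerivAt_zero {𝕜 X : Type*}
    [NontriviallyNormedField 𝕜] [NormedAddCommGroup X] [NormedSpace 𝕜 X] [CompleteSpace X]
    (K : X →L[𝕜] X) {N : X → X}
    (hN : HasStrictFDerivAt N (0 : X →L[𝕜] X) 0) (hN0 : N 0 = 0) :
    ∀ᶠ a in 𝓝 (0 : X), ∃ z, z = a + K (N z) := by
  have hG : HasStrictFDerivAt (fun z => z - K (N z))
      ((ContinuousLinearEquiv.refl 𝕜 X : X →L[𝕜] X)) 0 := by
    simpa using (hasStrictFDerivAt_id (0 : X)).fun_sub (K.hasStrictFDerivAt.comp 0 hN)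
  have hmap := hG.map_nhds_eq_of_equiv
  simp only [hN0, map_zero, sub_zero] at hmap
  filter_upwards [hmap ▸ range_mem_map] with a ⟨z, hz⟩
  exact ⟨z, by rw [← hz, sub_add_cancel]⟩

theorem ContinuousMap.hasStrictFDerivAt_comp_zero {𝕜 α E F : Type*} [NontriviallyNormedField 𝕜]
    [TopologicalSpace α] [CompactSpace α] [NormedAddCommGroup E] [NormedSpace 𝕜 E]
    [NormedAddCommGroup F] [NormedSpace 𝕜 F] (f : C(E, F))
    (hf : HasStrictFDerivAt f (0 : E →L[𝕜] F) 0) :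
    HasStrictFDerivAt (fun z : C(α, E) => f.comp z) (0 : C(α, E) →L[𝕜] C(α, F)) 0 := by
  rw [hasStrictFDerivAt_iff_isLittleO] at hf ⊢
  simp only [_root_.zero_apply, sub_zero] at hf ⊢
  refine Asymptotics.IsLittleO.of_bound fun c hc => ?_
  obtain ⟨R, hR, hlip⟩ := Metric.eventually_nhds_iff.1 (hf.def hc)
  filter_upwards [Metric.ball_mem_nhds _ hR] with p hp
  refine (ContinuousMap.norm_le _ (by positivity)).2 fun x => ?_
  have hx : dist (p.1 x, p.2 x) (0, 0) < R := by
    simp only [Metric.mem_ball, Prod.dist_eq, dist_zero_right, max_lt_iff] at hp ⊢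
    exact ⟨(p.1.norm_coe_le_norm x).trans_lt hp.1, (p.2.norm_coe_le_norm x).trans_lt hp.2⟩
  calc ‖f (p.1 x) - f (p.2 x)‖ ≤ c * ‖p.1 x - p.2 x‖ := hlip hx
    _ ≤ c * ‖p.1 - p.2‖ := by gcongr; exact (p.1 - p.2).norm_coe_le_norm x

section VariationOfConstants

variable {E : Type*} [NormedAddCommGroup E] [NormedSpace ℝ E] {L : E →L[ℝ] E}

variable (L) in
noncomputable def variationOfConstants (y₀ : E) (g : ℝ → E) (t : ℝ) : E :=
  exp (t • L) (y₀ + ∫ s in (0 : ℝ)..t, exp ((-s) • L) (g s))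

theorem variationOfConstants_smul (c : ℝ) (y₀ : E) (g : ℝ → E) :
    variationOfConstants L (c • y₀) (c • g) = c • variationOfConstants L y₀ g := by
  ext t
  simp only [variationOfConstants, Pi.smul_apply, map_smul, intervalIntegral.integral_smul,
    ← smul_add]

theorem norm_variationOfConstants_le {y₀ : E} {g : ℝ → E} {M G T t : ℝ}
    (hM : ∀ τ ∈ Icc (-T) T, ‖exp (τ • L)‖ ≤ M) (hG : ∀ s, ‖g s‖ ≤ G) (ht : t ∈ Icc 0 T) :
    ‖variationOfConstants L y₀ g t‖ ≤ M * (‖y₀‖ + T * (M * G)) := by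
  have hT : 0 ≤ T := ht.1.trans ht.2
  have hM0 : 0 ≤ M := (norm_nonneg _).trans (hM 0 ⟨by linarith, hT⟩)
  have hG0 : 0 ≤ G := (norm_nonneg _).trans (hG 0)
  have hint : ‖∫ s in (0 : ℝ)..t, exp ((-s) • L) (g s)‖ ≤ M * G * |t - 0| := by
    refine norm_integral_le_of_norm_le_const fun s hs => ?_
    rw [uIoc_of_le ht.1] at hs
    have hτ : -s ∈ Icc (-T) T := ⟨by linarith [hs.2, ht.2], by linarith [hs.1]⟩
    calc ‖exp ((-s) • L) (g s)‖ ≤ M * ‖g s‖ := (exp ((-s) • L)).le_of_opNorm_le (hM _ hτ) _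
      _ ≤ M * G := by gcongr; exact hG s
  rw [sub_zero, abs_of_nonneg ht.1] at hint
  calc ‖variationOfConstants L y₀ g t‖
      ≤ M * ‖y₀ + ∫ s in (0 : ℝ)..t, exp ((-s) • L) (g s)‖ :=
        (exp (t • L)).le_of_opNorm_le (hM t ⟨by linarith [ht.1], ht.2⟩) _
    _ ≤ M * (‖y₀‖ + T * (M * G)) := by
        gcongr
        refine (norm_add_le _ _).trans ?_
        nlinarith [mul_nonneg hM0 hG0, ht.2]

variable [CompleteSpace E]

theorem exp_smul_mul_exp_smul (L : E →L[ℝ] E) (s t : ℝ) :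
    exp (s • L) * exp (t • L) = exp ((s + t) • L) := by
  have h := expSeries_radius_eq_top ℝ (E →L[ℝ] E)
  rw [add_smul, exp_add_of_commute_of_mem_ball (((Commute.refl L).smul_left s).smul_right t)
    (h ▸ edist_lt_top _ _) (h ▸ edist_lt_top _ _)]

theorem exp_smul_apply_exp_neg_smul_apply (L : E →L[ℝ] E) (t : ℝ) (x : E) :
    exp (t • L) (exp ((-t) • L) x) = x := by
  rw [← mul_apply_eq_comp, exp_smul_mul_exp_smul, add_neg_cancel, zero_smul,
    exp_zero, one_apply_eq_self]

theorem continuous_exp_smul (L : E →L[ℝ] E) : Continuous fun t : ℝ => exp (t • L) :=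
  continuous_iff_continuousAt.2 fun t => (hasDerivAt_exp_smul_const L t).continuousAt

theorem continuous_exp_neg_smul_apply {g : ℝ → E} (hg : Continuous g) :
    Continuous fun s : ℝ => exp ((-s) • L) (g s) :=
  ((continuous_exp_smul L).comp continuous_neg).clm_apply hg

theorem variationOfConstants_add {y₀ y₀' : E} {g g' : ℝ → E} (hg : Continuous g)
    (hg' : Continuous g') :
    variationOfConstants L (y₀ + y₀') (g + g') =
      variationOfConstants L y₀ g + variationOfConstants L y₀' g' := by
  ext t
  simp only [variationOfConstants, Pi.add_apply, map_add,
    integral_add ((continuous_exp_neg_smul_apply hg).intervalIntegrable _ _)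
      ((continuous_exp_neg_smul_apply hg').intervalIntegrable _ _)]
  abel

theorem hasDerivAt_variationOfConstants (y₀ : E) {g : ℝ → E} (hg : Continuous g) (t : ℝ) :
    HasDerivAt (variationOfConstants L y₀ g) (L (variationOfConstants L y₀ g t) + g t) t := by
  have hprim := ((continuous_exp_neg_smul_apply (L := L) hg).integral_hasStrictDerivAt 0
    t).hasDerivAt.const_add y₀
  refine ((hasDerivAt_exp_smul_const' L t).clm_apply hprim).congr_deriv ?_
  rw [exp_smul_apply_exp_neg_smul_apply]
  rfl

theorem continuous_variationOfConstants (y₀ : E) {g : ℝ → E} (hg : Continuous g) :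
    Continuous (variationOfConstants L y₀ g) :=
  continuous_iff_continuousAt.2 fun t => (hasDerivAt_variationOfConstants y₀ hg t).continuousAt

theorem variationOfConstants_eq_add_integral (y₀ : E) {g : ℝ → E} (hg : Continuous g) (t : ℝ) :
    variationOfConstants L y₀ g t =
      y₀ + ∫ s in (0 : ℝ)..t, L (variationOfConstants L y₀ g s) + g s := by
  have hv := continuous_variationOfConstants (L := L) y₀ hg
  rw [integral_eq_sub_of_hasDerivAt (fun s _ => hasDerivAt_variationOfConstants y₀ hg s)
    ((by fun_prop : Continuous fun s => L (variationOfConstants L y₀ g s) + g s).intervalIntegrable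
      _ _)]
  simp [variationOfConstants]

variable (L) in
noncomputable def duhamel {T : ℝ} (hT : 0 ≤ T) : E × C(Icc 0 T, E) →L[ℝ] C(Icc 0 T, E) :=
  LinearMap.mkContinuousOfExistsBound
    { toFun := fun p => ContinuousMap.restrict (Icc 0 T)
        ⟨_, continuous_variationOfConstants p.1 (ContinuousMap.IccExtend hT p.2).continuous⟩
      map_add' := fun p q => by
        ext t
        simp only [ContinuousMap.restrict_apply, ContinuousMap.coe_mk, ContinuousMap.add_apply,
          Prod.fst_add, Prod.snd_add]
        rw [← Pi.add_apply (variationOfConstants L p.1 _), ← variationOfConstants_add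
          (ContinuousMap.IccExtend hT p.2).continuous (ContinuousMap.IccExtend hT q.2).continuous]
        rfl
      map_smul' := fun c p => by
        ext t
        simp only [ContinuousMap.restrict_apply, ContinuousMap.coe_mk, ContinuousMap.smul_apply,
          Prod.smul_fst, Prod.smul_snd, RingHom.id_apply]
        rw [← Pi.smul_apply c (variationOfConstants L p.1 _), ← variationOfConstants_smul]
        rfl }
    (by
      obtain ⟨M, hM⟩ := isCompact_Icc.exists_bound_of_continuousOn (s := Icc (-T) T)
        (continuous_exp_smul L).continuousOn
      refine ⟨M * (1 + T * M), fun p => ?_⟩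
      have hM0 : 0 ≤ M := (norm_nonneg _).trans (hM 0 ⟨by linarith, hT⟩)
      refine (ContinuousMap.norm_le _ (by positivity)).2 fun t => ?_
      have hG : ∀ s, ‖IccExtend hT p.2 s‖ ≤ ‖p‖ := fun s =>
        (p.2.norm_coe_le_norm _).trans (norm_snd_le p)
      refine (norm_variationOfConstants_le hM hG t.2).trans ?_
      have hfst := norm_fst_le p
      have hTM : 0 ≤ T * M := by positivity
      nlinarith)

theorem duhamel_apply {T : ℝ} (hT : 0 ≤ T) (p : E × C(Icc 0 T, E)) (t : Icc 0 T) :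
    duhamel L hT p t = variationOfConstants L p.1 (IccExtend hT p.2) t :=
  rfl

end VariationOfConstants

section Controllability

variable {E F : Type*} [NormedAddCommGroup E] [NormedSpace ℝ E]
  [NormedAddCommGroup F] [NormedSpace ℝ F] {L : E →L[ℝ] E} {T : ℝ}

def KalmanCondition (L : E →L[ℝ] E) (B : F →L[ℝ] E) : Prop :=
  Submodule.span ℝ (range fun p : ℕ × F => (L ^ p.1) (B p.2)) = ⊤

variable [CompleteSpace E]

theorem exp_smul_pow_apply_eq_zero {G : Type*} [NormedAddCommGroup G] [NormedSpace ℝ G]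
    (φ : E →L[ℝ] G) {U : Set ℝ} (hU : IsOpen U) {x : E}
    (hx : ∀ t ∈ U, φ (exp (t • L) x) = 0) (k : ℕ) : ∀ t ∈ U, φ (exp (t • L) ((L ^ k) x)) = 0 := by
  induction k with
  | zero => simpa using hx
  | succ k ih =>
    intro t ht
    have hd : HasDerivAt (fun s : ℝ => φ (exp (s • L) ((L ^ k) x)))
        (φ (exp (t • L) ((L ^ (k + 1)) x))) t := by
      simpa only [pow_succ', mul_apply_eq_comp, map_zero, add_zero, Function.comp_def] using
        φ.hasFDerivAt.comp_hasDerivAt t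
          ((hasDerivAt_exp_smul_const L t).clm_apply (hasDerivAt_const t ((L ^ k) x)))
    have h0 : (fun s : ℝ => φ (exp (s • L) ((L ^ k) x))) =ᶠ[𝓝 t] fun _ => 0 :=
      eventually_of_mem (hU.mem_nhds ht) ih
    exact hd.unique ((hasDerivAt_const t (0 : G)).congr_of_eventuallyEq h0)

theorem eq_zero_of_exp_smul_pow_apply_eq_zero {G : Type*} [AddCommGroup G] [Module ℝ G]
    {B : F →L[ℝ] E} (hK : KalmanCondition L B) (φ : E →ₗ[ℝ] G) (t : ℝ)
    (h : ∀ k v, φ (exp (t • L) ((L ^ k) (B v))) = 0) : φ = 0 := by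
  have hker : ⊤ ≤ LinearMap.ker (φ ∘ₗ ((exp (t • L) : E →L[ℝ] E) : E →ₗ[ℝ] E)) :=
    (eq_top_iff.1 hK).trans (Submodule.span_le.2 (by rintro _ ⟨⟨k, v⟩, rfl⟩; exact h k v))
  ext x
  rw [LinearMap.zero_apply, ← exp_smul_apply_exp_neg_smul_apply L t x]
  exact hker Submodule.mem_top

variable (L) in
noncomputable def reachMap (B : F →L[ℝ] E) (hT : 0 ≤ T) : C(Icc 0 T, F) →L[ℝ] E :=
  ContinuousMap.evalCLM ℝ ⟨T, right_mem_Icc.2 hT⟩ ∘L duhamel L hT ∘L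
    ContinuousLinearMap.inr ℝ E _ ∘L B.compLeftContinuous ℝ (Icc 0 T)

theorem reachMap_apply (B : F →L[ℝ] E) (hT : 0 ≤ T) (u : C(Icc 0 T, F)) :
    reachMap L B hT u = exp (T • L) (∫ s in (0 : ℝ)..T, exp ((-s) • L) (B (IccExtend hT u s))) :=
  congrArg (fun x => exp (T • L) x) (zero_add _)

theorem exp_smul_apply_eq_zero_of_forall_reachMap {B : F →L[ℝ] E} (hT : 0 < T) {φ : E →L[ℝ] ℝ}
    (hφ : ∀ u, φ (reachMap L B hT.le u) = 0) (v : F) :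
    ∀ t ∈ Ioo (-T) 0, φ (exp (T • L) (exp (t • L) (B v))) = 0 := by
  set g : ℝ → ℝ := fun s => φ (exp (T • L) (exp ((-s) • L) (B v)))
  have hg : Continuous g := φ.continuous.comp ((exp (T • L)).continuous.comp
    (continuous_exp_neg_smul_apply continuous_const))
  set u : C(Icc 0 T, F) :=
    ⟨fun s => g s • v, (hg.comp continuous_subtype_val).smul continuous_const⟩
  have hint : ∫ s in (0 : ℝ)..T, g s * g s = 0 := by
    have hBu : Continuous fun s => B (IccExtend hT.le u s) :=
      B.continuous.comp (ContinuousMap.IccExtend hT.le u).continuous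
    refine Eq.trans ?_ (hφ u)
    rw [reachMap_apply, ← ContinuousLinearMap.comp_apply,
      ← ContinuousLinearMap.intervalIntegral_comp_comm _
        ((continuous_exp_neg_smul_apply (L := L) hBu).intervalIntegrable 0 T)]
    refine intervalIntegral.integral_congr fun s hs => ?_
    rw [uIcc_of_le hT.le] at hs
    simp [IccExtend_of_mem _ _ hs, g, u]
  have hzero : ∀ s ∈ Ioo 0 T, g s = 0 := by
    have hae := (integral_eq_zero_iff_of_le_of_nonneg_ae hT.le
      (ae_of_all _ fun s => mul_self_nonneg (g s)) ((hg.mul hg).intervalIntegrable _ _)).1 hint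
    intro s hs
    exact mul_self_eq_zero.1 (Measure.eqOn_Ioo_of_ae_eq volume
      (ae_restrict_of_ae_restrict_of_subset Ioo_subset_Ioc_self hae)
      (hg.mul hg).continuousOn continuousOn_const hs)
  intro t ht
  simpa [g] using hzero (-t) ⟨by linarith [ht.2], by linarith [ht.1]⟩

theorem range_reachMap_eq_top [FiniteDimensional ℝ E] {B : F →L[ℝ] E}
    (hK : KalmanCondition L B) (hT : 0 < T) : (reachMap L B hT.le).range = ⊤ := by
  by_contra hne
  obtain ⟨φ, hφ0, hφ⟩ := Submodule.exists_le_ker_of_lt_top _ (lt_top_iff_ne_top.2 hne)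
  have hvanish := exp_smul_apply_eq_zero_of_forall_reachMap hT
    (φ := LinearMap.toContinuousLinearMap φ) fun u => hφ ⟨u, rfl⟩
  have hφT : φ ∘ₗ ((exp (T • L) : E →L[ℝ] E) : E →ₗ[ℝ] E) = 0 :=
    eq_zero_of_exp_smul_pow_apply_eq_zero hK _ (-(T / 2)) fun k v =>
      exp_smul_pow_apply_eq_zero (LinearMap.toContinuousLinearMap φ ∘L exp (T • L)) isOpen_Ioo
        (hvanish v) k _ ⟨by linarith, by linarith⟩
  refine hφ0 (LinearMap.ext fun x => ?_)
  rw [← exp_smul_apply_exp_neg_smul_apply L T x]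
  exact LinearMap.congr_fun hφT _

end Controllability

section NonlinearControl

variable {E F : Type*} [NormedAddCommGroup E] [NormedSpace ℝ E] [CompleteSpace E]
  [NormedAddCommGroup F] [NormedSpace ℝ F] {L : E →L[ℝ] E} {B : F →L[ℝ] E} {T : ℝ}

theorem eventually_exists_eq_duhamel [FiniteDimensional ℝ E] (hK : KalmanCondition L B)
    (hT : 0 < T) (f : C(E, E)) (hf : HasStrictFDerivAt f (0 : E →L[ℝ] E) 0) (hf0 : f 0 = 0) :
    ∀ᶠ p : E × E in 𝓝 0, ∃ (z : C(Icc 0 T, E)) (u : C(Icc 0 T, F)),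
      z = duhamel L hT.le (p.1, f.comp z + B.compLeftContinuous ℝ _ u) ∧
        z ⟨T, right_mem_Icc.2 hT.le⟩ = p.2 := by
  obtain ⟨U, hU⟩ :=
    (reachMap L B hT.le).exists_rightInverse_of_surjective (range_reachMap_eq_top hK hT)
  set eT := ContinuousMap.evalCLM ℝ (M := E) (⟨T, right_mem_Icc.2 hT.le⟩ : Icc 0 T)
  set Bc := B.compLeftContinuous ℝ (Icc 0 T)
  set D₀ := duhamel L hT.le ∘L ContinuousLinearMap.inl ℝ E (C(Icc 0 T, E))
  set D₁ := duhamel L hT.le ∘L ContinuousLinearMap.inr ℝ E (C(Icc 0 T, E))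
  have hD : ∀ x g, duhamel L hT.le (x, g) = D₀ x + D₁ g := fun x g => by
    rw [show (x, g) = (x, 0) + (0, g) by simp, map_add]
    rfl
  have hreach : ∀ c, eT (D₁ (Bc (U c))) = c := fun c => DFunLike.congr_fun hU c
  set a : E × E → C(Icc 0 T, E) := fun p => D₀ p.1 + D₁ (Bc (U (p.2 - eT (D₀ p.1))))
  have ha : Tendsto a (𝓝 0) (𝓝 0) := by
    have : Continuous a := by fun_prop
    simpa [a] using this.tendsto 0
  filter_upwards [ha.eventually (eventually_exists_eq_add_of_hasStrictFDerivAt_zero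
    (D₁ - D₁ ∘L Bc ∘L U ∘L eT ∘L D₁) (ContinuousMap.hasStrictFDerivAt_comp_zero f hf)
    (by ext; simp [hf0]))] with p ⟨z, hz⟩
  set c := p.2 - eT (D₀ p.1) - eT (D₁ (f.comp z))
  have hzD : z = D₀ p.1 + D₁ (f.comp z + Bc (U c)) := hz.trans (by
    simp only [a, c, sub_apply, ContinuousLinearMap.comp_apply, map_add, map_sub]
    abel)
  refine ⟨z, U c, hzD.trans (hD _ _).symm, ?_⟩
  change eT z = p.2
  rw [hzD, map_add, map_add, map_add, hreach]
  simp only [c]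
  abel

theorem IccExtend_eq_add_integral_of_eq_duhamel (hT : 0 ≤ T) {f : C(E, E)} {y₀ : E}
    {z : C(Icc 0 T, E)} {u : C(Icc 0 T, F)}
    (hz : z = duhamel L hT (y₀, f.comp z + B.compLeftContinuous ℝ _ u)) :
    ∀ t ∈ Icc 0 T, IccExtend hT z t = y₀ + ∫ s in (0 : ℝ)..t,
      L (IccExtend hT z s) + f (IccExtend hT z s) + B (IccExtend hT u s) := by
  set g := IccExtend hT ⇑(f.comp z + B.compLeftContinuous ℝ _ u)
  have hzv : ∀ t ∈ Icc 0 T, IccExtend hT z t = variationOfConstants L y₀ g t := fun t ht => by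
    rw [IccExtend_of_mem _ _ ht]
    exact DFunLike.congr_fun hz _
  have hg : Continuous g :=
    (ContinuousMap.IccExtend hT (f.comp z + B.compLeftContinuous ℝ _ u)).continuous
  intro t ht
  rw [hzv t ht, variationOfConstants_eq_add_integral y₀ hg]
  congr 1
  refine intervalIntegral.integral_congr fun s hs => ?_
  rw [uIcc_of_le ht.1] at hs
  have hsT : s ∈ Icc 0 T := ⟨hs.1, hs.2.trans ht.2⟩
  rw [← hzv s hsT, add_assoc]
  simp only [g, IccExtend_of_mem _ _ hsT]
  rfl

theorem eventually_exists_control_of_kalmanCondition [FiniteDimensional ℝ E]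
    (hK : KalmanCondition L B) (hT : 0 < T) {f : E → E} (hf : ContDiff ℝ 1 f) (hf0 : f 0 = 0)
    (hDf0 : fderiv ℝ f 0 = 0) :
    ∀ᶠ p : E × E in 𝓝 0, ∃ (u : ℝ → F) (y : ℝ → E),
      MemLp u ⊤ (volume.restrict (Ioc 0 T)) ∧ Continuous y ∧
      (∀ t ∈ Icc 0 T, y t = p.1 + ∫ s in (0 : ℝ)..t, L (y s) + f (y s) + B (u s)) ∧
      y T = p.2 := by
  have hf' : HasStrictFDerivAt f (0 : E →L[ℝ] E) 0 :=
    hDf0 ▸ hf.contDiffAt.hasStrictFDerivAt one_ne_zero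
  filter_upwards [eventually_exists_eq_duhamel hK hT ⟨f, hf.continuous⟩ hf' hf0]
    with p ⟨z, u, hz, hzT⟩
  refine ⟨IccExtend hT.le u, IccExtend hT.le z, ?_, (ContinuousMap.IccExtend hT.le z).continuous,
    IccExtend_eq_add_integral_of_eq_duhamel hT.le hz, by rwa [IccExtend_right]⟩
  exact memLp_top_of_bound (ContinuousMap.IccExtend hT.le u).continuous.aestronglyMeasurable ‖u‖
    (ae_of_all _ fun s => u.norm_coe_le_norm _)

end NonlinearControl

noncomputable def Matrix.mulVecCLM {k l : ℕ} (M : Matrix (Fin k) (Fin l) ℝ) :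
    (Fin l → ℝ) →L[ℝ] (Fin k → ℝ) :=
  LinearMap.toContinuousLinearMap M.mulVecLin

theorem Matrix.mulVecCLM_pow_apply {k : ℕ} (M : Matrix (Fin k) (Fin k) ℝ) (j : ℕ) (x : Fin k → ℝ) :
    (M.mulVecCLM ^ j) x = (M ^ j).mulVec x := by
  induction j with
  | zero => simp
  | succ j ih => rw [pow_succ', pow_succ', mul_apply_eq_comp, ih, ← Matrix.mulVec_mulVec]; rfl

theorem kalmanCondition_mulVecCLM_of_rank_kalmanMatrix {n m : ℕ} {A : Matrix (Fin n) (Fin n) ℝ}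
    {B : Matrix (Fin n) (Fin m) ℝ} (hK : (kalmanMatrix A B).rank = n) :
    KalmanCondition A.mulVecCLM B.mulVecCLM := by
  have hcols : Submodule.span ℝ (range (kalmanMatrix A B).col) = ⊤ :=
    Submodule.eq_top_of_finrank_eq
      (by rw [← Matrix.rank_eq_finrank_span_cols, hK, Module.finrank_fin_fun])
  refine eq_top_iff.2 (hcols ▸ Submodule.span_mono ?_)
  rintro _ ⟨⟨k, j⟩, rfl⟩
  refine ⟨(k, Pi.single j 1), ?_⟩
  change (A.mulVecCLM ^ (k : ℕ)) (B.mulVec (Pi.single j 1)) = _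
  rw [Matrix.mulVecCLM_pow_apply, Matrix.mulVec_mulVec, Matrix.mulVec_single_one]
  rfl

theorem local_exact_controllability_nonlinear_general {n m : ℕ}
    (A : Matrix (Fin n) (Fin n) ℝ) (B : Matrix (Fin n) (Fin m) ℝ) (T : ℝ) (hT : 0 < T)
    (hKalman : (kalmanMatrix A B).rank = n)
    (f : (Fin n → ℝ) → (Fin n → ℝ)) (hf : ContDiff ℝ 1 f)
    (hf0 : f 0 = 0) (hDf0 : fderiv ℝ f 0 = 0) :
    ∃ r > 0, ∀ y0 y1 : Fin n → ℝ, ‖y0‖ < r → ‖y1‖ < r →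
      ∃ (u : ℝ → Fin m → ℝ) (y : ℝ → Fin n → ℝ),
        MemLp u ⊤ (volume.restrict (Set.Ioc 0 T)) ∧
        ContinuousOn y (Set.Icc 0 T) ∧
        (∀ t ∈ Set.Icc (0:ℝ) T,
          y t = y0 + ∫ s in (0:ℝ)..t,
            (A.mulVec (y s) + f (y s) + B.mulVec (u s))) ∧
        y T = y1 := by
  obtain ⟨r, hr, hctrl⟩ := Metric.eventually_nhds_iff.1
    (eventually_exists_control_of_kalmanCondition
      (kalmanCondition_mulVecCLM_of_rank_kalmanMatrix hKalman) hT hf hf0 hDf0)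
  refine ⟨r, hr, fun y0 y1 hy0 hy1 => ?_⟩
  obtain ⟨u, y, hu, hy, hsol, hyT⟩ :=
    hctrl (y := (y0, y1)) (by simpa [Prod.dist_eq] using max_lt hy0 hy1)
  exact ⟨u, y, hu, hy.continuousOn, hsol, hyT⟩

/-- Local exact controllability around `0` of `y' = Ay + f(y) + Bu`, where `(A,B)`
satisfies the Kalman rank condition and `f(y) = O(|y|^{1+δ})` near `0`.  Solutions are
Carathéodory solutions, i.e. solutions of the integral equation. -/
theorem local_exact_controllability_nonlinear {n m : ℕ}
    (A : Matrix (Fin n) (Fin n) ℝ) (B : Matrix (Fin n) (Fin m) ℝ) (T : ℝ) (hT : 0 < T)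
    (hKalman : (kalmanMatrix A B).rank = n)
    (f : (Fin n → ℝ) → (Fin n → ℝ)) (hf : ContDiff ℝ 1 f)
    (hf0 : f 0 = 0) (hDf0 : fderiv ℝ f 0 = 0)
    (δ C ρ : ℝ) (hδ : 0 < δ) (hC : 0 < C) (hρ : 0 < ρ)
    (hgrowth : ∀ y : Fin n → ℝ, ‖y‖ ≤ ρ → ‖f y‖ ≤ C * ‖y‖ ^ (1 + δ)) :
    ∃ r > 0, ∀ y0 y1 : Fin n → ℝ, ‖y0‖ < r → ‖y1‖ < r →
      ∃ (u : ℝ → Fin m → ℝ) (y : ℝ → Fin n → ℝ),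
        MemLp u ⊤ (volume.restrict (Set.Ioc 0 T)) ∧
        ContinuousOn y (Set.Icc 0 T) ∧
        (∀ t ∈ Set.Icc (0:ℝ) T,
          y t = y0 + ∫ s in (0:ℝ)..t,
            (A.mulVec (y s) + f (y s) + B.mulVec (u s))) ∧
        y T = y1 :=
  local_exact_controllability_nonlinear_general A B T hT hKalman f hf hf0 hDf0
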